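/- arXiv:1303.0831 — 5 statements merged into one kernel-verified Lean document; each statement's English description precedes it below -/
import Mathlib

section
/- Let G be a generalized matrix algebra (with possibly nonzero pairings Φ: M⊗N → A, Ψ: N⊗M → B). Suppose Θ is a Lie derivation of G given in the form Θ(a,m;n,b) = (δ₁(a) - mn₀ - m₀n + δ₄(b), am₀ - m₀b + τ₂(m); n₀a - bn₀ + ν₃(n), μ₁(a) + n₀m + nm₀ + μ₄(b)) where m₀ ∈ M, n₀ ∈ N, and the component maps satisfy conditions (1)–(5) of Li–Wei: δ₁ is a Lie derivation of A with δ₁(mn) = δ₄(nm) + τ₂(m)n + mν₃(n); μ₄ is a Lie derivation of B with μ₄(nm) = μ₁(mn) + nτ₂(m) + ν₃(n)m; δ₄ maps into Z(A) and vanishes on commutators of B, μ₁ maps into Z(B) and vanishes on commutators of A; τ₂(am) = aτ₂(m) + δ₁(a)m - mμ₁(a), τ₂(mb) = τ₂(m)b + mμ₄(b) - δ₄(b)m; ν₃(na) = ν₃(n)a + nδ₁(a) - μ₁(a)n, ν₃(bn) = bν₃(n) + μ₄(b)n - nδ₄(b). Then Θ is indeed a Lie derivation of G: Θ([X,Y])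 = [Θ(X),Y] + [X,Θ(Y)] for all X, Y ∈ G. -/
set_option maxRecDepth 8000
set_option maxHeartbeats 2000000


open MulOpposite

/-- A map Θ on a generalized matrix algebra of the Li–Wei form, whose
components satisfy conditions (1)–(5), is a Lie derivation. -/
theorem stmt_10 (R A B M N : Type*) [CommRing R] [Ring A] [Ring B]
    [Algebra R A] [Algebra R B]
    [AddCommGroup M] [Module R M] [Module A M] [Module Bᵐᵒᵖ M] [SMulCommClass A Bᵐᵒᵖ M]
    [AddCommGroup N] [Module R N] [Module B N] [Module Aᵐᵒᵖ N] [SMulCommClass B Aᵐᵒᵖ N]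
    -- the bilinear pairings Φ : M ⊗ N → A and Ψ : N ⊗ M → B of the Morita context
    (Φ : M → N → A) (Ψ : N → M → B)
    (hΦadd₁ : ∀ m m' n, Φ (m + m') n = Φ m n + Φ m' n)
    (hΦadd₂ : ∀ m n n', Φ m (n + n') = Φ m n + Φ m n')
    (hΦl : ∀ (a : A) m n, Φ (a • m) n = a * Φ m n)
    (hΦr : ∀ m n (a : A), Φ m (op a • n) = Φ m n * a)
    (hΦbal : ∀ m (b : B) n, Φ (op b • m) n = Φ m (b • n))
    (hΨadd₁ : ∀ n n' m, Ψ (n + n') m = Ψ n m + Ψ n' m)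
    (hΨadd₂ : ∀ n m m', Ψ n (m + m') = Ψ n m + Ψ n m')
    (hΨl : ∀ (b : B) n m, Ψ (b • n) m = b * Ψ n m)
    (hΨr : ∀ n m (b : B), Ψ n (op b • m) = Ψ n m * b)
    (hΨbal : ∀ n (a : A) m, Ψ (op a • n) m = Ψ n (a • m))
    (hMorita₁ : ∀ m n m', (Φ m n) • m' = op (Ψ n m') • m)
    (hMorita₂ : ∀ n m n', (Ψ n m) • n' = op (Φ m n') • n)
    -- multiplication of the generalized matrix algebra
    (mul : (A × M × N × B) → (A × M × N × B) → (A × M × N × B))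
    (hmul : ∀ X Y : A × M × N × B,
      mul X Y = (X.1 * Y.1 + Φ X.2.1 Y.2.2.1,
        X.1 • Y.2.1 + op Y.2.2.2 • X.2.1,
        X.2.2.2 • Y.2.2.1 + op Y.1 • X.2.2.1,
        Ψ X.2.2.1 Y.2.1 + X.2.2.2 * Y.2.2.2))
    (m₀ : M) (n₀ : N)
    (δ₁ : A →ₗ[R] A) (δ₄ : B →ₗ[R] A) (τ₂ : M →ₗ[R] M)
    (ν₃ : N →ₗ[R] N) (μ₁ : A →ₗ[R] B) (μ₄ : B →ₗ[R] B)
    -- condition (1)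
    (h1a : ∀ a a' : A, δ₁ (a * a' - a' * a) =
      (δ₁ a * a' - a' * δ₁ a) + (a * δ₁ a' - δ₁ a' * a))
    (h1b : ∀ m n, δ₁ (Φ m n) = δ₄ (Ψ n m) + Φ (τ₂ m) n + Φ m (ν₃ n))
    -- condition (2)
    (h2a : ∀ b b' : B, μ₄ (b * b' - b' * b) =
      (μ₄ b * b' - b' * μ₄ b) + (b * μ₄ b' - μ₄ b' * b))
    (h2b : ∀ n m, μ₄ (Ψ n m) = μ₁ (Φ m n) + Ψ n (τ₂ m) + Ψ (ν₃ n) m)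
    -- condition (3): δ₄ maps into Z(A) and kills commutators of B;
    -- μ₁ maps into Z(B) and kills commutators of A
    (h3a : ∀ (b : B) (x : A), δ₄ b * x = x * δ₄ b)
    (h3b : ∀ b b' : B, δ₄ (b * b' - b' * b) = 0)
    (h3c : ∀ (a : A) (y : B), μ₁ a * y = y * μ₁ a)
    (h3d : ∀ a a' : A, μ₁ (a * a' - a' * a) = 0)
    -- condition (4)
    (h4a : ∀ (a : A) (m : M), τ₂ (a • m) = a • τ₂ m + δ₁ a • m - op (μ₁ a) • m)
    (h4b : ∀ (m : M) (b : B), τ₂ (op b • m) = op b • τ₂ m + op (μ₄ b) • m - δ₄ b • m)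
    -- condition (5)
    (h5a : ∀ (n : N) (a : A), ν₃ (op a • n) = op a • ν₃ n + op (δ₁ a) • n - μ₁ a • n)
    (h5b : ∀ (b : B) (n : N), ν₃ (b • n) = b • ν₃ n + μ₄ b • n - op (δ₄ b) • n)
    -- the Lie derivation in Li–Wei form
    (Θ : (A × M × N × B) → (A × M × N × B))
    (hΘ : ∀ X : A × M × N × B,
      Θ X = (δ₁ X.1 - Φ X.2.1 n₀ - Φ m₀ X.2.2.1 + δ₄ X.2.2.2,
        X.1 • m₀ - op X.2.2.2 • m₀ + τ₂ X.2.1,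
        op X.1 • n₀ - X.2.2.2 • n₀ + ν₃ X.2.2.1,
        μ₁ X.1 + Ψ n₀ X.2.1 + Ψ X.2.2.1 m₀ + μ₄ X.2.2.2)) :
    ∀ X Y : A × M × N × B,
      Θ (mul X Y - mul Y X) =
        (mul (Θ X) Y - mul Y (Θ X)) + (mul X (Θ Y) - mul (Θ Y) X) := by
  have hΦsub₁ : ∀ m m' n, Φ (m - m') n = Φ m n - Φ m' n := fun m m' n =>
    eq_sub_of_add_eq (by rw [← hΦadd₁, sub_add_cancel])
  have hΦsub₂ : ∀ m n n', Φ m (n - n') = Φ m n - Φ m n' := fun m n n' =>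
    eq_sub_of_add_eq (by rw [← hΦadd₂, sub_add_cancel])
  have hΨsub₁ : ∀ n n' m, Ψ (n - n') m = Ψ n m - Ψ n' m := fun n n' m =>
    eq_sub_of_add_eq (by rw [← hΨadd₁, sub_add_cancel])
  have hΨsub₂ : ∀ n m m', Ψ n (m - m') = Ψ n m - Ψ n m' := fun n m m' =>
    eq_sub_of_add_eq (by rw [← hΨadd₂, sub_add_cancel])
  rintro ⟨a, m, n, b⟩ ⟨a', m', n', b'⟩
  have Ha : δ₁ (a * a') - δ₁ (a' * a) =
      (δ₁ a * a' - a' * δ₁ a) + (a * δ₁ a' - δ₁ a' * a) := by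
    rw [← map_sub]; exact h1a a a'
  have Hb : μ₄ (b * b') - μ₄ (b' * b) =
      (μ₄ b * b' - b' * μ₄ b) + (b * μ₄ b' - μ₄ b' * b) := by
    rw [← map_sub]; exact h2a b b'
  have Hc : δ₄ (b * b') - δ₄ (b' * b) = 0 := by rw [← map_sub]; exact h3b b b'
  have Hd : μ₁ (a * a') - μ₁ (a' * a) = 0 := by rw [← map_sub]; exact h3d a a'
  simp only [hmul, hΘ, Prod.mk_sub_mk, Prod.mk_add_mk, Prod.mk.injEq]
  refine ⟨?_, ?_, ?_, ?_⟩ <;>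
    simp only [map_add, map_sub, hΦadd₁, hΦadd₂, hΦsub₁, hΦsub₂, hΦl, hΦr,
      hΨadd₁, hΨadd₂, hΨsub₁, hΨsub₂, hΨl, hΨr,
      smul_add, smul_sub, add_smul, sub_smul, mul_smul, op_add, op_sub, op_mul,
      mul_add, add_mul, mul_sub, sub_mul] <;>
    simp only [h4a, h4b, h5a, h5b, smul_add, smul_sub, add_smul, sub_smul,
      hΦbal, hΨbal, hMorita₁, hMorita₂, h3a, h3c]
  · linear_combination (norm := abel1) Ha + Hc + h1b m n' - h1b m' n
  · linear_combination (norm := abel1)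
      smul_comm a (op b') m₀ - smul_comm a' (op b) m₀
  · linear_combination (norm := abel1)
      smul_comm b' (op a) n₀ - smul_comm b (op a') n₀
  · linear_combination (norm := abel1) Hd + Hb + h2b n m' - h2b n' m
end

section
/- Let G be a generalized matrix algebra and let l_A : A → Z(A), δ₄ : B → Z(A), μ₁ : A → Z(B), l_B : B → Z(B) be linear maps satisfying: l_A and μ₁ vanish on commutators of A, δ₄ and l_B vanish on commutators of B, l_A(mn) = δ₄(nm) and l_B(nm) = μ₁(mn) for all m ∈ M, n ∈ N, l_A(a)m = mμ₁(a), nl_A(a) = μ₁(a)n, l_B(b)n = nδ₄(b), ml_B(b) = δ₄(b)m for all a ∈ A, b ∈ B, m ∈ M, n ∈ N. Define h : G → G by h(a,m;n,b) = (l_A(a) + δ₄(b), 0; 0, μ₁(a) + l_B(b)). Then h maps into the center of G and h([X,Y]) = 0 for all X, Y ∈ G. -/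
open MulOpposite

/-- The map h(a,m;n,b) = (l_A(a)+δ₄(b), 0; 0, μ₁(a)+l_B(b)) maps into the
center of the generalized matrix algebra and vanishes on all commutators. -/
theorem stmt_11 (R A B M N : Type*) [CommRing R] [Ring A] [Ring B]
    [Algebra R A] [Algebra R B]
    [AddCommGroup M] [Module R M] [Module A M] [Module Bᵐᵒᵖ M] [SMulCommClass A Bᵐᵒᵖ M]
    [AddCommGroup N] [Module R N] [Module B N] [Module Aᵐᵒᵖ N] [SMulCommClass B Aᵐᵒᵖ N]
    (Φ : M → N → A) (Ψ : N → M → B)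
    (hΦadd₁ : ∀ m m' n, Φ (m + m') n = Φ m n + Φ m' n)
    (hΦadd₂ : ∀ m n n', Φ m (n + n') = Φ m n + Φ m n')
    (hΨadd₁ : ∀ n n' m, Ψ (n + n') m = Ψ n m + Ψ n' m)
    (hΨadd₂ : ∀ n m m', Ψ n (m + m') = Ψ n m + Ψ n m')
    (mul : (A × M × N × B) → (A × M × N × B) → (A × M × N × B))
    (hmul : ∀ X Y : A × M × N × B,
      mul X Y = (X.1 * Y.1 + Φ X.2.1 Y.2.2.1,
        X.1 • Y.2.1 + op Y.2.2.2 • X.2.1,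
        X.2.2.2 • Y.2.2.1 + op Y.1 • X.2.2.1,
        Ψ X.2.2.1 Y.2.1 + X.2.2.2 * Y.2.2.2))
    (lA : A →ₗ[R] A) (δ₄ : B →ₗ[R] A) (μ₁ : A →ₗ[R] B) (lB : B →ₗ[R] B)
    -- central values
    (hlAZ : ∀ (a x : A), lA a * x = x * lA a)
    (hδ₄Z : ∀ (b : B) (x : A), δ₄ b * x = x * δ₄ b)
    (hμ₁Z : ∀ (a : A) (y : B), μ₁ a * y = y * μ₁ a)
    (hlBZ : ∀ (b y : B), lB b * y = y * lB b)
    -- vanishing on commutators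
    (hlAcomm : ∀ a a' : A, lA (a * a' - a' * a) = 0)
    (hμ₁comm : ∀ a a' : A, μ₁ (a * a' - a' * a) = 0)
    (hδ₄comm : ∀ b b' : B, δ₄ (b * b' - b' * b) = 0)
    (hlBcomm : ∀ b b' : B, lB (b * b' - b' * b) = 0)
    -- compatibility with the pairings
    (hlApair : ∀ m n, lA (Φ m n) = δ₄ (Ψ n m))
    (hlBpair : ∀ n m, lB (Ψ n m) = μ₁ (Φ m n))
    -- module conditions
    (hlAM : ∀ (a : A) (m : M), lA a • m = op (μ₁ a) • m)
    (hlAN : ∀ (n : N) (a : A), op (lA a) • n = μ₁ a • n)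
    (hlBN : ∀ (b : B) (n : N), lB b • n = op (δ₄ b) • n)
    (hlBM : ∀ (m : M) (b : B), op (lB b) • m = δ₄ b • m)
    (h : (A × M × N × B) → (A × M × N × B))
    (hh : ∀ X : A × M × N × B,
      h X = (lA X.1 + δ₄ X.2.2.2, 0, 0, μ₁ X.1 + lB X.2.2.2)) :
    (∀ X Y : A × M × N × B, mul (h X) Y = mul Y (h X)) ∧
    (∀ X Y : A × M × N × B, h (mul X Y - mul Y X) = 0) := by

  have hΦ0₁ : ∀ n, Φ 0 n = 0 := fun n => by
    have := hΦadd₁ 0 0 n; rw [add_zero] at this; exact (left_eq_add.mp this)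
  have hΦ0₂ : ∀ m, Φ m 0 = 0 := fun m => by
    have := hΦadd₂ m 0 0; rw [add_zero] at this; exact (left_eq_add.mp this)
  have hΨ0₁ : ∀ m, Ψ 0 m = 0 := fun m => by
    have := hΨadd₁ 0 0 m; rw [add_zero] at this; exact (left_eq_add.mp this)
  have hΨ0₂ : ∀ n, Ψ n 0 = 0 := fun n => by
    have := hΨadd₂ n 0 0; rw [add_zero] at this; exact (left_eq_add.mp this)
  refine ⟨fun X Y => ?_, fun X Y => ?_⟩
  · rw [hmul, hmul, hh]
    simp only [hΦ0₁, hΦ0₂, hΨ0₁, hΨ0₂, smul_zero, add_zero, zero_add]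
    refine Prod.ext ?_ (Prod.ext ?_ (Prod.ext ?_ ?_))
    · simp only [add_mul, mul_add, hlAZ, hδ₄Z]
    · simp only [add_smul, op_add, hlAM, hlBM]
    · simp only [add_smul, op_add, hlAN, hlBN]
    · simp only [add_mul, mul_add, hμ₁Z, hlBZ]
  · rw [hh, hmul, hmul]
    simp only [Prod.fst_sub, Prod.snd_sub]
    have e1 : (X.1 * Y.1 + Φ X.2.1 Y.2.2.1) - (Y.1 * X.1 + Φ Y.2.1 X.2.2.1)
        = (X.1 * Y.1 - Y.1 * X.1) + (Φ X.2.1 Y.2.2.1 - Φ Y.2.1 X.2.2.1) := by abel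
    have e2 : (Ψ X.2.2.1 Y.2.1 + X.2.2.2 * Y.2.2.2) - (Ψ Y.2.2.1 X.2.1 + Y.2.2.2 * X.2.2.2)
        = (X.2.2.2 * Y.2.2.2 - Y.2.2.2 * X.2.2.2) + (Ψ X.2.2.1 Y.2.1 - Ψ Y.2.2.1 X.2.1) := by
      abel
    have hlA' : ∀ a a' : A, lA (a * a') = lA (a' * a) := fun a a' =>
      sub_eq_zero.mp (by rw [← map_sub]; exact hlAcomm a a')
    have hμ₁' : ∀ a a' : A, μ₁ (a * a') = μ₁ (a' * a) := fun a a' =>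
      sub_eq_zero.mp (by rw [← map_sub]; exact hμ₁comm a a')
    have hδ₄' : ∀ b b' : B, δ₄ (b * b') = δ₄ (b' * b) := fun b b' =>
      sub_eq_zero.mp (by rw [← map_sub]; exact hδ₄comm b b')
    have hlB' : ∀ b b' : B, lB (b * b') = lB (b' * b) := fun b b' =>
      sub_eq_zero.mp (by rw [← map_sub]; exact hlBcomm b b')
    rw [e1, e2, map_add, map_add, map_add, map_add, map_sub, map_sub, map_sub, map_sub,
      map_sub, map_sub, map_sub, map_sub,
      hlA' X.1 Y.1, hμ₁' X.1 Y.1, hδ₄' X.2.2.2 Y.2.2.2, hlB' X.2.2.2 Y.2.2.2,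
      hlApair X.2.1 Y.2.2.1, hlApair Y.2.1 X.2.2.1,
      hlBpair X.2.2.1 Y.2.1, hlBpair Y.2.2.1 X.2.1]
    refine Prod.ext ?_ (Prod.ext rfl (Prod.ext rfl ?_)) <;> simp
end

section
/- Let δ be a Lie derivation of a unital algebra A, G(x,y) = δ(xy) - xδ(y) - δ(x)y, and suppose μ : A → Z(B) is linear, M is an (A,B)-bimodule, τ : M → M is linear with τ(am) = aτ(m) + δ(a)m - mμ(a) for all a ∈ A, m ∈ M. Then G(x,y)m = mμ(xy) - xmμ(y) - ymμ(x) for all x, y ∈ A and m ∈ M. -/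
open MulOpposite

/-- For a Lie derivation δ with τ(am) = aτ(m) + δ(a)m - mμ(a),
one has G(x,y)m = mμ(xy) - xmμ(y) - ymμ(x). -/
theorem stmt_12 (R A B M : Type*) [CommRing R] [Ring A] [Ring B]
    [Algebra R A] [Algebra R B]
    [AddCommGroup M] [Module R M] [Module A M] [Module Bᵐᵒᵖ M] [SMulCommClass A Bᵐᵒᵖ M]
    (δ : A →ₗ[R] A)
    (hLie : ∀ x y : A, δ (x * y - y * x) = (δ x * y - y * δ x) + (x * δ y - δ y * x))
    (μ : A →ₗ[R] B)
    (hμZ : ∀ (a : A) (b : B), μ a * b = b * μ a)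
    (τ : M →ₗ[R] M)
    (hτ : ∀ (a : A) (m : M), τ (a • m) = a • τ m + δ a • m - op (μ a) • m)
    (G : A → A → A)
    (hG : ∀ x y : A, G x y = δ (x * y) - x * δ y - δ x * y) :
    ∀ (x y : A) (m : M),
      G x y • m = op (μ (x * y)) • m - x • (op (μ y) • m) - y • (op (μ x) • m) := by
  intro x y m
  have h : (x * y) • τ m + δ (x * y) • m - op (μ (x * y)) • m
      = x • (y • τ m + δ y • m - op (μ y) • m) + δ x • (y • m) - op (μ x) • (y • m) := by
    rw [← hτ, ← hτ, ← hτ, mul_smul]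
  rw [mul_smul, smul_sub, smul_add, ← smul_comm y (op (μ x)) m] at h
  rw [hG, sub_smul, sub_smul, mul_smul, mul_smul]
  have h2 : δ (x * y) • m
      = x • (δ y • m) - x • (op (μ y) • m) + δ x • (y • m) - y • (op (μ x) • m)
        + op (μ (x * y)) • m := by
    have := h
    abel_nf at this ⊢
    linear_combination (norm := abel) this
  rw [h2]
  abel
end

section
/- Let δ be a Lie derivation of a unital algebra A, G(x,y) = δ(xy) - xδ(y) - δ(x)y, N a (B,A)-bimodule, μ : A → Z(B) linear, ν : N → N linear with ν(na) = ν(n)a + nδ(a) - μ(a)n for all a ∈ A, n ∈ N. Then nG(x,y) = μ(xy)n - μ(y)nx - μ(x)ny for all x, y ∈ A and n ∈ N. -/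
open MulOpposite

/-- For a Lie derivation δ with ν(na) = ν(n)a + nδ(a) - μ(a)n,
one has nG(x,y) = μ(xy)n - μ(y)nx - μ(x)ny. -/
theorem stmt_13 (R A B N : Type*) [CommRing R] [Ring A] [Ring B]
    [Algebra R A] [Algebra R B]
    [AddCommGroup N] [Module R N] [Module B N] [Module Aᵐᵒᵖ N] [SMulCommClass B Aᵐᵒᵖ N]
    (δ : A →ₗ[R] A)
    (hLie : ∀ x y : A, δ (x * y - y * x) = (δ x * y - y * δ x) + (x * δ y - δ y * x))
    (μ : A →ₗ[R] B)
    (hμZ : ∀ (a : A) (b : B), μ a * b = b * μ a)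
    (ν : N →ₗ[R] N)
    (hν : ∀ (n : N) (a : A), ν (op a • n) = op a • ν n + op (δ a) • n - μ a • n)
    (G : A → A → A)
    (hG : ∀ x y : A, G x y = δ (x * y) - x * δ y - δ x * y) :
    ∀ (x y : A) (n : N),
      op (G x y) • n = μ (x * y) • n - op x • (μ y • n) - op y • (μ x • n) := by
  intro x y n
  have h1 := hν n (x * y)
  have h3 := hν n x
  have h2 := hν (op x • n) y
  rw [h3] at h2
  rw [show (op (x * y) : Aᵐᵒᵖ) = op y * op x from op_mul x y, mul_smul, mul_smul, h2] at h1
  simp only [smul_add, smul_sub] at h1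
  have key : op (δ (x * y)) • n
      = μ (x * y) • n + (op y • (op (δ x) • n) - op y • (μ x • n))
        + (op (δ y) • (op x • n) - μ y • (op x • n)) := by
    have h0 := sub_eq_zero_of_eq h1.symm
    rw [← sub_eq_zero]
    abel_nf at h0 ⊢
    exact h0
  rw [hG, op_sub, op_sub, sub_smul, sub_smul, op_mul, op_mul, mul_smul, mul_smul, key,
    ← smul_comm (μ y) (op x) n, ← smul_comm (μ x) (op y) n]
  abel
end

section
/- Let A be a unital associative algebra, δ a Lie derivation of A, μ : A → Z(B) linear, M an (A,B)-bimodule, N a (B,A)-bimodule, τ : M → M and ν : N → N linear maps with τ(am) = aτ(m) + δ(a)m - mμ(a) and ν(na) = ν(n)a + nδ(a) - μ(a)n. Then for f(t) = t^k (k ≥ 1) and x ∈ A, the element a_x = Σ_{j=1}^{k-1} x^{k-1-j} G(x^j, x) (where G(x,y) = δ(xy) - xδ(y) - δ(x)y) satisfies a_x m = mμ(x^k) - k x^{k-1} m μ(x) for all m ∈ M. -/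
open MulOpposite

/-- For f(t) = t^k, the element a_x = Σ_{j=1}^{k-1} x^{k-1-j} G(x^j, x)
satisfies a_x m = mμ(x^k) - k x^{k-1} m μ(x) for all m ∈ M. -/
theorem stmt_19 (K A B M N : Type*) [Field K] [Ring A] [Ring B]
    [Algebra K A] [Algebra K B]
    [AddCommGroup M] [Module K M] [Module A M] [Module Bᵐᵒᵖ M] [SMulCommClass A Bᵐᵒᵖ M]
    [AddCommGroup N] [Module K N] [Module B N] [Module Aᵐᵒᵖ N] [SMulCommClass B Aᵐᵒᵖ N]
    (δ : A →ₗ[K] A)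
    (hLie : ∀ x y : A, δ (x * y - y * x) = (δ x * y - y * δ x) + (x * δ y - δ y * x))
    (μ : A →ₗ[K] B)
    (hμZ : ∀ (a : A) (b : B), μ a * b = b * μ a)
    (τ : M →ₗ[K] M)
    (hτ : ∀ (a : A) (m : M), τ (a • m) = a • τ m + δ a • m - op (μ a) • m)
    (ν : N →ₗ[K] N)
    (hν : ∀ (n : N) (a : A), ν (op a • n) = op a • ν n + op (δ a) • n - μ a • n)
    (G : A → A → A)
    (hG : ∀ x y : A, G x y = δ (x * y) - x * δ y - δ x * y)
    (k : ℕ) (hk : 1 ≤ k) (x : A) (ax : A)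
    (hax : ax = ∑ j ∈ Finset.Icc 1 (k - 1), x ^ (k - 1 - j) * G (x ^ j) x) :
    ∀ m : M, ax • m = op (μ (x ^ k)) • m - k • (x ^ (k - 1) • (op (μ x) • m)) := by
  intro m
  have key : ∀ (a b : A) (m : M),
      G a b • m = op (μ (a * b)) • m - op (μ b) • (a • m) - op (μ a) • (b • m) := by
    intro a b m
    have e1 := hτ (a * b) m
    have e2 := hτ a (b • m)
    have e3 := hτ b m
    simp only [mul_smul] at e1
    rw [e3] at e2
    rw [e2] at e1
    rw [hG, sub_smul, sub_smul, mul_smul, mul_smul]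
    simp only [smul_sub, smul_add] at e1 ⊢
    have comm : ∀ (b : Bᵐᵒᵖ) (a : A) (m' : M), a • b • m' = b • a • m' :=
      fun b a m' => smul_comm a b m'
    simp only [comm] at e1 ⊢
    linear_combination (norm := abel) -e1
  subst hax
  induction k, hk using Nat.le_induction with
  | base =>
    simp [pow_one]
  | succ k hk ih =>
    obtain ⟨n, rfl⟩ : ∃ n, k = n + 1 := ⟨k - 1, (Nat.succ_pred_eq_of_pos hk).symm⟩
    simp only [Nat.add_sub_cancel] at ih ⊢
    rw [Finset.sum_Icc_succ_top (by omega : 1 ≤ n + 1)]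
    have hsum : (∑ j ∈ Finset.Icc 1 n, x ^ (n + 1 - j) * G (x ^ j) x)
        = x * ∑ j ∈ Finset.Icc 1 n, x ^ (n - j) * G (x ^ j) x := by
      rw [Finset.mul_sum]
      refine Finset.sum_congr rfl fun j hj => ?_
      simp only [Finset.mem_Icc] at hj
      rw [← mul_assoc, ← pow_succ']
      congr 2
      omega
    rw [hsum, add_smul, mul_smul, ih, Nat.sub_self, pow_zero, one_mul, key]
    have comm : ∀ (b : Bᵐᵒᵖ) (a : A) (m' : M), a • b • m' = b • a • m' :=
      fun b a m' => smul_comm a b m'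
    have comm2 : ∀ (c : ℕ) (a : A) (m' : M), a • c • m' = c • a • m' :=
      fun c a m' => smul_comm a c m'
    simp only [smul_sub, smul_add, comm, comm2, ← mul_smul, ← pow_succ', ← pow_succ]
    conv_rhs => rw [succ_nsmul]
    abel
end
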